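/- Let φ(t) = log(1 + e^{−t}) / log 2 be the normalized logistic loss, let α₁ ≤ 0 and α₃ ≤ 0 be real constants, and let α₂, α₄ be arbitrary real constants. Then for every real score s ≠ 0 with sign sgn(s) ∈ {−1,1} and every label y ∈ {−1,1}: α₁·sgn(s) + α₂ y + α₃·y·sgn(s) + α₄ ≤ α₁(1 − 2φ(s)) + α₂ y + α₃(1 − 2φ(y·s)) + α₄; that is, the surrogate loss V(s,y) = α₁(1 − 2φ(s)) + α₂ y + α₃(1 − 2φ(y·s)) + α₄ upper bounds the performative zero-one-type loss of the classifier h = sgn(s). -/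
import Mathlib

noncomputable section

/-- The normalized logistic loss `φ(t) = log(1 + e^{−t}) / log 2`. -/
def logisticLoss (t : ℝ) : ℝ := Real.log (1 + Real.exp (-t)) / Real.log 2

/-- The sign function on nonzero reals: `sgn(s) = 1` if `s > 0` and `−1` if `s < 0`. -/
def sgn (s : ℝ) : ℝ := if 0 < s then 1 else -1

lemma key (t : ℝ) : 1 - 2 * logisticLoss t ≤ sgn t := by
  have hlog2 : (0:ℝ) < Real.log 2 := Real.log_pos (by norm_num)
  unfold logisticLoss sgn
  split_ifs with h
  · have h1 : (0:ℝ) ≤ Real.log (1 + Real.exp (-t)) := by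
      apply Real.log_nonneg
      nlinarith [Real.exp_pos (-t)]
    have := div_nonneg h1 hlog2.le
    linarith
  · have h1 : Real.log 2 ≤ Real.log (1 + Real.exp (-t)) := by
      apply Real.log_le_log (by norm_num)
      nlinarith [Real.one_le_exp (show (0:ℝ) ≤ -t by linarith [not_lt.mp h])]
    have := (div_le_div_iff_of_pos_right hlog2).mpr h1
    rw [div_self hlog2.ne'] at this
    linarith

/-- The surrogate loss
`V(s, y) = α1(1 − 2φ(s)) + α2 y + α3(1 − 2φ(ys)) + α4` upper bounds the performative
zero-one-type loss of the classifier `h = sgn(s)`: for `α1 ≤ 0`, `α3 ≤ 0`, `s ≠ 0` and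
`y ∈ {−1, 1}`,
`α1 sgn(s) + α2 y + α3 y sgn(s) + α4 ≤ α1(1 − 2φ(s)) + α2 y + α3(1 − 2φ(ys)) + α4`. -/
theorem surrogate_upper_bounds_performative_loss
    (α1 α2 α3 α4 : ℝ) (hα1 : α1 ≤ 0) (hα3 : α3 ≤ 0)
    (s : ℝ) (hs : s ≠ 0) (y : ℝ) (hy : y = 1 ∨ y = -1) :
    α1 * sgn s + α2 * y + α3 * y * sgn s + α4
      ≤ α1 * (1 - 2 * logisticLoss s) + α2 * y
        + α3 * (1 - 2 * logisticLoss (y * s)) + α4 := by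
  have h1 : α1 * sgn s ≤ α1 * (1 - 2 * logisticLoss s) :=
    mul_le_mul_of_nonpos_left (key s) hα1
  have hys : y * sgn s = sgn (y * s) := by
    rcases hy with rfl | rfl
    · simp [sgn]
    · unfold sgn
      rcases lt_or_gt_of_ne hs with h | h
      · rw [if_neg (not_lt.mpr h.le), if_pos (by nlinarith)]; ring
      · rw [if_pos h, if_neg (by simp; nlinarith)]; ring
  have h3 : α3 * y * sgn s ≤ α3 * (1 - 2 * logisticLoss (y * s)) := by
    rw [mul_assoc, hys]
    exact mul_le_mul_of_nonpos_left (key (y * s)) hα3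
  linarith

end
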